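/- Under the standing assumptions on f and the endpoint growth hypothesis, there exists H > 0 such that for every nonzero k ∈ E and every t ∈ [s_k − α_k, s_k + α_k] with t ≠ s_k, the functions g_k(t) = (f'(t) − f'(s_k))/(f''(s_k)(t − s_k)) and h_k(t) = 2(f(t) − f(s_k) − f'(s_k)(t − s_k))/(f''(s_k)(t − s_k)²) satisfy 1/H ≤ g_k(t) ≤ H and 1/H ≤ h_k(t) ≤ H, where α_k = ½·min{s_k − a, b − s_k}. -/

import Mathlib

open Real Set Filter

/-- Euclidean norm of a lattice point `k ∈ ℤ²`. -/
noncomputable def knorm (k : ℤ × ℤ) : ℝ := Real.sqrt ((k.1 : ℝ) ^ 2 + (k.2 : ℝ) ^ 2)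

/-- The weight `w_r(k) = r / (1 + r^{-1/3}|k|)^ν`. -/
noncomputable def wgt (ν r : ℝ) (k : ℤ × ℤ) : ℝ :=
  r / (1 + r ^ (-(1:ℝ)/3) * knorm k) ^ ν

/-- The oscillatory integral
`I_r(k) = ∫_a^b e^{-ir(t k₁ + f(t) k₂)} (k₂ - k₁ f'(t))/(k₁² + k₂²) dt`. -/
noncomputable def oscInt (a b : ℝ) (f : ℝ → ℝ) (r : ℝ) (k : ℤ × ℤ) : ℂ :=
  ∫ t in a..b,
    Complex.exp (-Complex.I * (r : ℂ) * ((t * (k.1 : ℝ) + f t * (k.2 : ℝ) : ℝ) : ℂ)) *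
      ((((k.2 : ℝ) - (k.1 : ℝ) * deriv f t) / ((k.1 : ℝ) ^ 2 + (k.2 : ℝ) ^ 2) : ℝ) : ℂ)

/-- The resonant set `E = {k ∈ ℤ² : k₁ + k₂ f'(s) = 0 for some s ∈ (a,b)}`. -/
def Eset (a b : ℝ) (f : ℝ → ℝ) : Set (ℤ × ℤ) :=
  {k | ∃ s ∈ Set.Ioo a b, (k.1 : ℝ) + (k.2 : ℝ) * deriv f s = 0}

/-- `α_k = ½ min{s_k - a, b - s_k}`, given a choice `s` of the stationary points. -/
noncomputable def alphaK (a b : ℝ) (s : ℤ × ℤ → ℝ) (k : ℤ × ℤ) : ℝ :=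
  (1/2) * min (s k - a) (b - s k)

/-- `B(k) = α_k^{-2} |k₂ f''(s_k)|⁻¹`. -/
noncomputable def Bfun (a b : ℝ) (f : ℝ → ℝ) (s : ℤ × ℤ → ℝ) (k : ℤ × ℤ) : ℝ :=
  (alphaK a b s k ^ 2)⁻¹ * |(k.2 : ℝ) * deriv (deriv f) (s k)|⁻¹


/-- The endpoint growth hypothesis at an endpoint `tstar ∈ {a,b}`: near `tstar`,
either (i) `|f''| ≍ 1`, or (ii) `|f''(t)| ≍ |t - tstar|`, or
(iii) `|f''(t)| ≍ |t - tstar|⁻¹`. -/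
def EndpointGrowth (a b : ℝ) (f : ℝ → ℝ) (tstar : ℝ) : Prop :=
  (∃ c C' η : ℝ, 0 < c ∧ c < C' ∧ 0 < η ∧
    ∀ t ∈ Set.Ioo a b, |t - tstar| < η →
      c ≤ |deriv (deriv f) t| ∧ |deriv (deriv f) t| ≤ C') ∨
  (∃ c C' η : ℝ, 0 < c ∧ c < C' ∧ 0 < η ∧
    ∀ t ∈ Set.Ioo a b, |t - tstar| < η →
      c * |t - tstar| ≤ |deriv (deriv f) t| ∧ |deriv (deriv f) t| ≤ C' * |t - tstar|) ∨
  (∃ c C' η : ℝ, 0 < c ∧ c < C' ∧ 0 < η ∧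
    ∀ t ∈ Set.Ioo a b, |t - tstar| < η →
      c * |t - tstar|⁻¹ ≤ |deriv (deriv f) t| ∧ |deriv (deriv f) t| ≤ C' * |t - tstar|⁻¹)


section Aux

lemma mvt_aux (a b : ℝ) (f : ℝ → ℝ) (hfs : ContDiffOn ℝ (⊤ : ℕ∞) f (Set.Ioo a b))
    (x y : ℝ) (hxy : x < y) (hsub : Set.Icc x y ⊆ Set.Ioo a b) :
    ∃ ξ ∈ Set.Ioo x y, deriv f y - deriv f x = deriv (deriv f) ξ * (y - x) := by
  have hd1 : ContDiffOn ℝ (⊤ : ℕ∞) (deriv f) (Set.Ioo a b) := hfs.deriv_of_isOpen isOpen_Ioo (by simp)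
  have hc : ContinuousOn (deriv f) (Set.Icc x y) := hd1.continuousOn.mono hsub
  have hdd : DifferentiableOn ℝ (deriv f) (Set.Ioo x y) :=
    (hd1.differentiableOn (by simp)).mono (Set.Ioo_subset_Icc_self.trans hsub)
  obtain ⟨ξ, hξ, h⟩ := exists_deriv_eq_slope (deriv f) hxy hc hdd
  refine ⟨ξ, hξ, ?_⟩
  rw [h, div_mul_cancel₀]
  exact sub_ne_zero.2 hxy.ne'

lemma mvt_aux2 (a b : ℝ) (f : ℝ → ℝ) (hfs : ContDiffOn ℝ (⊤ : ℕ∞) f (Set.Ioo a b))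
    (p t : ℝ) (hpt : p ≠ t) (hsub : Set.Icc (min p t) (max p t) ⊆ Set.Ioo a b) :
    ∃ ξ ∈ Set.Ioo (min p t) (max p t),
      deriv f t - deriv f p = deriv (deriv f) ξ * (t - p) := by
  rcases hpt.lt_or_gt with h | h
  · rw [min_eq_left h.le, max_eq_right h.le] at hsub ⊢
    exact mvt_aux a b f hfs p t h hsub
  · rw [min_eq_right h.le, max_eq_left h.le] at hsub ⊢
    obtain ⟨ξ, hξ, he⟩ := mvt_aux a b f hfs t p h hsub
    exact ⟨ξ, hξ, by linear_combination -he⟩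

lemma taylor_aux (a b : ℝ) (f : ℝ → ℝ) (hfs : ContDiffOn ℝ (⊤ : ℕ∞) f (Set.Ioo a b))
    (p t : ℝ) (hpt : p ≠ t) (hsub : Set.Icc (min p t) (max p t) ⊆ Set.Ioo a b) :
    ∃ ξ ∈ Set.Ioo (min p t) (max p t),
      f t - f p - deriv f p * (t - p) = deriv (deriv f) ξ * (t - p) ^ 2 / 2 := by
  set F : ℝ → ℝ := fun u => f u - f p - deriv f p * (u - p) with hFdef
  set G : ℝ → ℝ := fun u => (u - p) ^ 2 with hGdef
  have hdf : ∀ x ∈ Set.Ioo a b, HasDerivAt f (deriv f x) x := fun x hx =>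
    (((hfs.differentiableOn (by simp)) x hx).differentiableAt (isOpen_Ioo.mem_nhds hx)).hasDerivAt
  have hF : ∀ x ∈ Set.Ioo a b, HasDerivAt F (deriv f x - deriv f p) x := by
    intro x hx
    have h1 : HasDerivAt (fun u => deriv f p * (u - p)) (deriv f p) x := by
      simpa using ((hasDerivAt_id x).sub_const p).const_mul (deriv f p)
    exact ((hdf x hx).sub_const (f p)).sub h1
  have hG : ∀ x : ℝ, HasDerivAt G (2 * (x - p)) x := by
    intro x
    have := ((hasDerivAt_id x).sub_const p).fun_pow 2
    simpa [mul_comm] using this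
  have hGc : Continuous G := by
    have : Continuous fun u : ℝ => (u - p) ^ 2 := by continuity
    simpa [hGdef] using this
  rcases hpt.lt_or_gt with h | h
  · rw [min_eq_left h.le, max_eq_right h.le] at hsub ⊢
    have hFc : ContinuousOn F (Set.Icc p t) := fun x hx =>
      (hF x (hsub hx)).continuousAt.continuousWithinAt
    obtain ⟨ξ, hξ, hE⟩ := exists_ratio_hasDerivAt_eq_ratio_slope F
      (fun x => deriv f x - deriv f p) h hFc
      (fun x hx => hF x (hsub (Set.Ioo_subset_Icc_self hx))) G (fun x => 2 * (x - p))
      hGc.continuousOn (fun x _ => hG x)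
    have hGp : G p = 0 := by simp [hGdef]
    have hFp : F p = 0 := by simp [hFdef]
    obtain ⟨ξ₂, hξ₂, hm⟩ := mvt_aux a b f hfs p ξ hξ.1
      ((Set.Icc_subset_Icc le_rfl hξ.2.le).trans hsub)
    refine ⟨ξ₂, ⟨hξ₂.1, hξ₂.2.trans hξ.2⟩, ?_⟩
    have hne : (2 : ℝ) * (ξ - p) ≠ 0 := by
      have : ξ - p ≠ 0 := sub_ne_zero.2 hξ.1.ne'
      positivity
    have h2 : (F t - deriv (deriv f) ξ₂ * (t - p) ^ 2 / 2) * (2 * (ξ - p)) = 0 := by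
      simp only [hGp, hFp, sub_zero] at hE
      have hGt : G t = (t - p) ^ 2 := rfl
      rw [hGt] at hE
      linear_combination -hE + (t - p) ^ 2 * hm
    rcases mul_eq_zero.1 h2 with h3 | h3
    · have : F t = deriv (deriv f) ξ₂ * (t - p) ^ 2 / 2 := by linarith
      simpa [hFdef] using this
    · exact absurd h3 hne
  · rw [min_eq_right h.le, max_eq_left h.le] at hsub ⊢
    have hFc : ContinuousOn F (Set.Icc t p) := fun x hx =>
      (hF x (hsub hx)).continuousAt.continuousWithinAt
    obtain ⟨ξ, hξ, hE⟩ := exists_ratio_hasDerivAt_eq_ratio_slope F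
      (fun x => deriv f x - deriv f p) h hFc
      (fun x hx => hF x (hsub (Set.Ioo_subset_Icc_self hx))) G (fun x => 2 * (x - p))
      hGc.continuousOn (fun x _ => hG x)
    have hGp : G p = 0 := by simp [hGdef]
    have hFp : F p = 0 := by simp [hFdef]
    obtain ⟨ξ₂, hξ₂, hm⟩ := mvt_aux a b f hfs ξ p hξ.2
      ((Set.Icc_subset_Icc hξ.1.le le_rfl).trans hsub)
    refine ⟨ξ₂, ⟨hξ.1.trans hξ₂.1, hξ₂.2⟩, ?_⟩
    have hne : (2 : ℝ) * (ξ - p) ≠ 0 := by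
      have : ξ - p ≠ 0 := sub_ne_zero.2 hξ.2.ne
      positivity
    have h2 : (F t - deriv (deriv f) ξ₂ * (t - p) ^ 2 / 2) * (2 * (ξ - p)) = 0 := by
      simp only [hGp, hFp] at hE
      have hGt : G t = (t - p) ^ 2 := rfl
      rw [hGt] at hE
      linear_combination hE - (t - p) ^ 2 * hm
    rcases mul_eq_zero.1 h2 with h3 | h3
    · have : F t = deriv (deriv f) ξ₂ * (t - p) ^ 2 / 2 := by linarith
      simpa [hFdef] using this
    · exact absurd h3 hne

lemma sign_aux (a b : ℝ) (hab : a < b) (f : ℝ → ℝ)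
    (hfs : ContDiffOn ℝ (⊤ : ℕ∞) f (Set.Ioo a b))
    (hf2 : ∀ t ∈ Set.Ioo a b, deriv (deriv f) t ≠ 0) :
    (∀ t ∈ Set.Ioo a b, 0 < deriv (deriv f) t) ∨
    (∀ t ∈ Set.Ioo a b, deriv (deriv f) t < 0) := by
  have hd1 : ContDiffOn ℝ (⊤ : ℕ∞) (deriv f) (Set.Ioo a b) := hfs.deriv_of_isOpen isOpen_Ioo (by simp)
  have hd2 : ContDiffOn ℝ (⊤ : ℕ∞) (deriv (deriv f)) (Set.Ioo a b) :=
    hd1.deriv_of_isOpen isOpen_Ioo (by simp)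
  have hcont : ContinuousOn (deriv (deriv f)) (Set.Ioo a b) := hd2.continuousOn
  have key : ∀ x ∈ Set.Ioo a b, ∀ y ∈ Set.Ioo a b,
      deriv (deriv f) x < 0 → 0 < deriv (deriv f) y → False := by
    intro x hx y hy hxn hyp
    have hsub : Set.uIcc x y ⊆ Set.Ioo a b := Set.ordConnected_Ioo.uIcc_subset hx hy
    have hmem : (0 : ℝ) ∈ Set.uIcc (deriv (deriv f) x) (deriv (deriv f) y) :=
      Set.mem_uIcc.2 (Or.inl ⟨hxn.le, hyp.le⟩)
    obtain ⟨z, hz, hz0⟩ := intermediate_value_uIcc (hcont.mono hsub) hmem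
    exact hf2 z (hsub hz) hz0
  have ht0 : (a + b) / 2 ∈ Set.Ioo a b := ⟨by linarith, by linarith⟩
  rcases (hf2 _ ht0).lt_or_gt with h0 | h0
  · right
    intro t ht
    rcases (hf2 t ht).lt_or_gt with h | h
    · exact h
    · exact absurd (key _ ht0 t ht h0 h) (by simp)
  · left
    intro t ht
    rcases (hf2 t ht).lt_or_gt with h | h
    · exact absurd (key t ht _ ht0 h h0) (by simp)
    · exact h

lemma endpoint_ratio (a b : ℝ) (f : ℝ → ℝ) (tstar : ℝ) (htst : tstar = a ∨ tstar = b)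
    (h : EndpointGrowth a b f tstar) :
    ∃ K η : ℝ, 1 ≤ K ∧ 0 < η ∧ ∀ s ∈ Set.Ioo a b, ∀ u ∈ Set.Ioo a b,
      |s - tstar| < η → |u - tstar| < η →
      |u - tstar| ≤ 2 * |s - tstar| → |s - tstar| ≤ 2 * |u - tstar| →
      |deriv (deriv f) u| ≤ K * |deriv (deriv f) s| := by
  have hpos : ∀ x ∈ Set.Ioo a b, 0 < |x - tstar| := by
    intro x hx
    rcases htst with rfl | rfl
    · exact abs_pos.2 (sub_ne_zero.2 hx.1.ne')
    · exact abs_pos.2 (sub_ne_zero.2 hx.2.ne)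
  rcases h with ⟨c, C', η, hc, hcC, hη, hb⟩ | ⟨c, C', η, hc, hcC, hη, hb⟩ |
    ⟨c, C', η, hc, hcC, hη, hb⟩ <;>
    refine ⟨2 * C' / c, η, by rw [le_div_iff₀ hc]; linarith, hη, ?_⟩ <;>
    intro s hs u hu hsη huη h1 h2 <;>
    obtain ⟨hs1, hs2⟩ := hb s hs hsη <;>
    obtain ⟨hu1, hu2⟩ := hb u hu huη <;>
    rw [div_mul_eq_mul_div, le_div_iff₀ hc]
  · nlinarith [abs_nonneg (deriv (deriv f) u)]
  · have e1 : c * |deriv (deriv f) u| ≤ c * (C' * |u - tstar|) :=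
      mul_le_mul_of_nonneg_left hu2 hc.le
    have e2 : C' * (c * |u - tstar|) ≤ C' * (c * (2 * |s - tstar|)) :=
      mul_le_mul_of_nonneg_left
        (mul_le_mul_of_nonneg_left h1 hc.le) (by linarith)
    have e3 : 2 * C' * (c * |s - tstar|) ≤ 2 * C' * |deriv (deriv f) s| :=
      mul_le_mul_of_nonneg_left hs1 (by linarith)
    linarith
  · have hps := hpos s hs
    have hpu := hpos u hu
    have hinv : |u - tstar|⁻¹ ≤ 2 * |s - tstar|⁻¹ := by
      rw [show (2:ℝ) * |s - tstar|⁻¹ = 2 / |s - tstar| by ring, inv_eq_one_div,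
        div_le_div_iff₀ hpu hps]
      linarith
    have e1 : c * |deriv (deriv f) u| ≤ c * (C' * |u - tstar|⁻¹) :=
      mul_le_mul_of_nonneg_left hu2 hc.le
    have e2 : C' * (c * |u - tstar|⁻¹) ≤ C' * (c * (2 * |s - tstar|⁻¹)) :=
      mul_le_mul_of_nonneg_left
        (mul_le_mul_of_nonneg_left hinv hc.le) (by linarith)
    have e3 : 2 * C' * (c * |s - tstar|⁻¹) ≤ 2 * C' * |deriv (deriv f) s| :=
      mul_le_mul_of_nonneg_left hs1 (by linarith)
    linarith

lemma core_ratio (a b : ℝ) (hab : a < b) (f : ℝ → ℝ)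
    (hcont : ContinuousOn (deriv (deriv f)) (Set.Ioo a b))
    (hf2 : ∀ t ∈ Set.Ioo a b, deriv (deriv f) t ≠ 0)
    (hea : EndpointGrowth a b f a) (heb : EndpointGrowth a b f b) :
    ∃ H : ℝ, 1 ≤ H ∧ ∀ s ∈ Set.Ioo a b, ∀ u ∈ Set.Ioo a b,
      |u - s| ≤ (1/2) * min (s - a) (b - s) →
      |deriv (deriv f) u| ≤ H * |deriv (deriv f) s| ∧
      |deriv (deriv f) s| ≤ H * |deriv (deriv f) u| := by
  obtain ⟨Ka, ηa, hKa, hηa, hA⟩ := endpoint_ratio a b f a (Or.inl rfl) hea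
  obtain ⟨Kb, ηb, hKb, hηb, hB⟩ := endpoint_ratio a b f b (Or.inr rfl) heb
  set ε : ℝ := min (min (2/3 * ηa) (2/3 * ηb)) ((b - a) / 4) with hεdef
  have hε : 0 < ε := by
    apply lt_min (lt_min (by linarith) (by linarith)) (by linarith)
  have hεa : ε ≤ 2/3 * ηa := (min_le_left _ _).trans (min_le_left _ _)
  have hεb : ε ≤ 2/3 * ηb := (min_le_left _ _).trans (min_le_right _ _)
  have hεab : ε ≤ (b - a) / 4 := min_le_right _ _
  set Kset : Set ℝ := Set.Icc (a + ε/2) (b - ε/2) with hKdef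
  have hKne : (Kset).Nonempty := Set.nonempty_Icc.2 (by linarith)
  have hKsub : Kset ⊆ Set.Ioo a b := fun x hx => ⟨by linarith [hx.1], by linarith [hx.2]⟩
  have hKcomp : IsCompact Kset := isCompact_Icc
  have habs : ContinuousOn (fun x => |deriv (deriv f) x|) Kset :=
    (hcont.mono hKsub).abs
  obtain ⟨xm, hxm, hmin⟩ := hKcomp.exists_isMinOn hKne habs
  obtain ⟨xM, hxM, hmax⟩ := hKcomp.exists_isMaxOn hKne habs
  set m := |deriv (deriv f) xm| with hmdef
  set M := |deriv (deriv f) xM| with hMdef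
  have hm : 0 < m := abs_pos.2 (hf2 xm (hKsub hxm))
  have hMm : m ≤ M := hmin hxM
  refine ⟨max (max Ka Kb) (M / m),
    le_trans hKa ((le_max_left _ _).trans (le_max_left _ _)), ?_⟩
  intro s hs u hu hd
  set H := max (max Ka Kb) (M / m) with hHdef
  have hH0 : 0 ≤ H :=
    le_trans (by linarith) (le_trans hKa ((le_max_left _ _).trans (le_max_left _ _)))
  have hps : 0 < s - a := by linarith [hs.1]
  have hqs : 0 < b - s := by linarith [hs.2]
  have hmin1 : min (s - a) (b - s) ≤ s - a := min_le_left _ _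
  have hmin2 : min (s - a) (b - s) ≤ b - s := min_le_right _ _
  have habs1 : -( (1/2) * min (s-a) (b-s)) ≤ u - s := neg_le_of_abs_le hd
  have habs2 : u - s ≤ (1/2) * min (s-a) (b-s) := le_of_abs_le hd
  have hua1 : (s - a) / 2 ≤ u - a := by linarith
  have hua2 : u - a ≤ 3/2 * (s - a) := by linarith
  have hbu1 : (b - s) / 2 ≤ b - u := by linarith
  have hbu2 : b - u ≤ 3/2 * (b - s) := by linarith
  have e1 : |s - a| = s - a := abs_of_pos hps
  have e2 : |u - a| = u - a := abs_of_pos (by linarith)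
  have e3 : |s - b| = b - s := by rw [abs_sub_comm]; exact abs_of_pos hqs
  have e4 : |u - b| = b - u := by rw [abs_sub_comm]; exact abs_of_pos (by linarith)
  by_cases hca : s - a < ε
  · have h1 : |s - a| < ηa := by rw [e1]; linarith
    have h2 : |u - a| < ηa := by rw [e2]; linarith
    have h3 : |u - a| ≤ 2 * |s - a| := by rw [e1, e2]; linarith
    have h4 : |s - a| ≤ 2 * |u - a| := by rw [e1, e2]; linarith
    have hKaH : Ka ≤ H := (le_max_left _ _).trans (le_max_left _ _)
    constructor
    · exact (hA s hs u hu h1 h2 h3 h4).trans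
        (mul_le_mul_of_nonneg_right hKaH (abs_nonneg _))
    · exact (hA u hu s hs h2 h1 h4 h3).trans
        (mul_le_mul_of_nonneg_right hKaH (abs_nonneg _))
  by_cases hcb : b - s < ε
  · have h1 : |s - b| < ηb := by rw [e3]; linarith
    have h2 : |u - b| < ηb := by rw [e4]; linarith
    have h3 : |u - b| ≤ 2 * |s - b| := by rw [e3, e4]; linarith
    have h4 : |s - b| ≤ 2 * |u - b| := by rw [e3, e4]; linarith
    have hKbH : Kb ≤ H := (le_max_right _ _).trans (le_max_left _ _)
    constructor
    · exact (hB s hs u hu h1 h2 h3 h4).trans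
        (mul_le_mul_of_nonneg_right hKbH (abs_nonneg _))
    · exact (hB u hu s hs h2 h1 h4 h3).trans
        (mul_le_mul_of_nonneg_right hKbH (abs_nonneg _))
  push_neg at hca hcb
  have hsK : s ∈ Kset := ⟨by linarith, by linarith⟩
  have huK : u ∈ Kset := ⟨by linarith, by linarith⟩
  have hMH : M / m ≤ H := le_max_right _ _
  have key : ∀ x ∈ Kset, ∀ y ∈ Kset,
      |deriv (deriv f) x| ≤ H * |deriv (deriv f) y| := by
    intro x hx y hy
    have hxM' : |deriv (deriv f) x| ≤ M := hmax hx
    have hym : m ≤ |deriv (deriv f) y| := hmin hy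
    have : M / m * m ≤ M / m * |deriv (deriv f) y| :=
      mul_le_mul_of_nonneg_left hym (div_nonneg (hm.le.trans hMm) hm.le)
    rw [div_mul_cancel₀ _ hm.ne'] at this
    calc |deriv (deriv f) x| ≤ M := hxM'
      _ ≤ M / m * |deriv (deriv f) y| := this
      _ ≤ H * |deriv (deriv f) y| := mul_le_mul_of_nonneg_right hMH (abs_nonneg _)
  exact ⟨key u huK s hsK, key s hsK u huK⟩

lemma ratio_bds (X Y H : ℝ) (hH : 1 ≤ H) (hpos : 0 < X / Y) (hXne : X ≠ 0) (hYne : Y ≠ 0)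
    (h1 : |X| ≤ H * |Y|) (h2 : |Y| ≤ H * |X|) : 1 / H ≤ X / Y ∧ X / Y ≤ H := by
  have hX := abs_pos.2 hXne
  have hY := abs_pos.2 hYne
  have hH0 : (0:ℝ) < H := lt_of_lt_of_le one_pos hH
  have he : X / Y = |X| / |Y| := by rw [← abs_div]; exact (abs_of_pos hpos).symm
  constructor
  · rw [he, div_le_div_iff₀ hH0 hY]; linarith
  · rw [he, div_le_iff₀ hY]; linarith

end Aux

/-- **Uniform two-sided bounds on the normalized difference quotients `g_k`, `h_k`.**
Under the standing assumptions on `f` and the endpoint growth hypothesis, there is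
`H > 0` such that for every nonzero `k ∈ E` and every
`t ∈ [s_k - α_k, s_k + α_k]`, `t ≠ s_k`, the functions
`g_k(t) = (f'(t) - f'(s_k))/(f''(s_k)(t - s_k))` and
`h_k(t) = 2(f(t) - f(s_k) - f'(s_k)(t - s_k))/(f''(s_k)(t - s_k)²)`
satisfy `1/H ≤ g_k(t) ≤ H` and `1/H ≤ h_k(t) ≤ H`. -/
theorem gk_hk_uniform_bounds (a b : ℝ) (hab : a < b) (f : ℝ → ℝ)
    (hfc : ContinuousOn f (Set.Icc a b))
    (hfs : ContDiffOn ℝ (⊤ : ℕ∞) f (Set.Ioo a b))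
    (hf2 : ∀ t ∈ Set.Ioo a b, deriv (deriv f) t ≠ 0)
    (hea : EndpointGrowth a b f a) (heb : EndpointGrowth a b f b)
    (s : ℤ × ℤ → ℝ)
    (hs : ∀ k : ℤ × ℤ, k ≠ 0 → k ∈ Eset a b f →
      s k ∈ Set.Ioo a b ∧ (k.1 : ℝ) + (k.2 : ℝ) * deriv f (s k) = 0) :
    ∃ H > (0:ℝ), ∀ k : ℤ × ℤ, k ≠ 0 → k ∈ Eset a b f →
      ∀ t ∈ Set.Icc (s k - alphaK a b s k) (s k + alphaK a b s k), t ≠ s k →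
        (1 / H ≤ (deriv f t - deriv f (s k)) / (deriv (deriv f) (s k) * (t - s k)) ∧
          (deriv f t - deriv f (s k)) / (deriv (deriv f) (s k) * (t - s k)) ≤ H) ∧
        (1 / H ≤ 2 * (f t - f (s k) - deriv f (s k) * (t - s k)) /
            (deriv (deriv f) (s k) * (t - s k) ^ 2) ∧
          2 * (f t - f (s k) - deriv f (s k) * (t - s k)) /
            (deriv (deriv f) (s k) * (t - s k) ^ 2) ≤ H) := by
  have hd1 : ContDiffOn ℝ (⊤ : ℕ∞) (deriv f) (Set.Ioo a b) := hfs.deriv_of_isOpen isOpen_Ioo (by simp)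
  have hd2 : ContDiffOn ℝ (⊤ : ℕ∞) (deriv (deriv f)) (Set.Ioo a b) :=
    hd1.deriv_of_isOpen isOpen_Ioo (by simp)
  obtain ⟨H, hH1, hcore⟩ := core_ratio a b hab f hd2.continuousOn hf2 hea heb
  have hsgn := sign_aux a b hab f hfs hf2
  refine ⟨H, lt_of_lt_of_le one_pos hH1, ?_⟩
  intro k hk hkE t ht htne
  obtain ⟨hsk, -⟩ := hs k hk hkE
  set p := s k with hpdef
  set α := alphaK a b s k with hαdef
  have hα0 : 0 < α := by
    rw [hαdef, alphaK]
    have : 0 < min (p - a) (b - p) := lt_min (by linarith [hsk.1]) (by linarith [hsk.2])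
    linarith
  have hαa : α ≤ (1/2) * (p - a) := by
    rw [hαdef, alphaK]
    have := min_le_left (p - a) (b - p); nlinarith
  have hαb : α ≤ (1/2) * (b - p) := by
    rw [hαdef, alphaK]
    have := min_le_right (p - a) (b - p); nlinarith
  have hIsub : Set.Icc (p - α) (p + α) ⊆ Set.Ioo a b := by
    intro x hx
    constructor
    · have := hx.1; have := hsk.1; linarith
    · have := hx.2; have := hsk.2; linarith
  have hpI : p ∈ Set.Icc (p - α) (p + α) := ⟨by linarith, by linarith⟩
  have hsubmm : Set.Icc (min p t) (max p t) ⊆ Set.Icc (p - α) (p + α) :=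
    Set.Icc_subset_Icc (le_min (by linarith) ht.1) (max_le (by linarith) ht.2)
  have hsub2 : Set.Icc (min p t) (max p t) ⊆ Set.Ioo a b := hsubmm.trans hIsub
  have hfpne : deriv (deriv f) p ≠ 0 := hf2 p hsk
  have htp : t - p ≠ 0 := sub_ne_zero.2 htne
  -- common handler for a point ξ in the window
  have handler : ∀ ξ ∈ Set.Ioo (min p t) (max p t),
      1 / H ≤ deriv (deriv f) ξ / deriv (deriv f) p ∧
      deriv (deriv f) ξ / deriv (deriv f) p ≤ H := by
    intro ξ hξ
    have hξI : ξ ∈ Set.Icc (p - α) (p + α) := hsubmm (Set.Ioo_subset_Icc_self hξ)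
    have hξab : ξ ∈ Set.Ioo a b := hIsub hξI
    have hαeq : α = (1/2) * min (p - a) (b - p) := rfl
    have hdist : |ξ - p| ≤ (1/2) * min (p - a) (b - p) := by
      rw [abs_le]
      exact ⟨by linarith [hξI.1], by linarith [hξI.2]⟩
    obtain ⟨hb1, hb2⟩ := hcore p hsk ξ hξab hdist
    have hpos : 0 < deriv (deriv f) ξ / deriv (deriv f) p := by
      rcases hsgn with hp | hn
      · exact div_pos (hp ξ hξab) (hp p hsk)
      · exact div_pos_of_neg_of_neg (hn ξ hξab) (hn p hsk)
    exact ratio_bds _ _ H hH1 hpos (hf2 ξ hξab) hfpne hb1 hb2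
  constructor
  · obtain ⟨ξ, hξ, hmvt⟩ := mvt_aux2 a b f hfs p t htne.symm hsub2
    have heq : (deriv f t - deriv f p) / (deriv (deriv f) p * (t - p)) =
        deriv (deriv f) ξ / deriv (deriv f) p := by
      rw [hmvt, mul_comm (deriv (deriv f) p) (t - p)]
      rw [mul_comm (deriv (deriv f) ξ) (t - p), mul_div_mul_left _ _ htp]
    rw [heq]
    exact handler ξ hξ
  · obtain ⟨ξ, hξ, htay⟩ := taylor_aux a b f hfs p t htne.symm hsub2
    have heq : 2 * (f t - f p - deriv f p * (t - p)) /
        (deriv (deriv f) p * (t - p) ^ 2) =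
        deriv (deriv f) ξ / deriv (deriv f) p := by
      rw [htay]
      have hsq : (t - p) ^ 2 ≠ 0 := pow_ne_zero 2 htp
      field_simp
    rw [heq]
    exact handler ξ hξ
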